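/- arXiv:2106.08275 — 5 statements merged into one kernel-verified Lean document; each statement's English description precedes it below -/
import Mathlib

section
/- For all positive integers r and n, S(r,n) = \sum_{j=1}^{r} (-1)^{r-j} r \binom{r-1}{j-1} (2^{n+j}-1)/(n+j). -/
/-- `S(r,n) = ∑_{k=0}^n (r/(k+r)) * C(n,k)` as a rational number. -/
def S (r n : ℕ) : ℚ :=
  ∑ k ∈ Finset.range (n + 1), (r : ℚ) / ((k : ℚ) + (r : ℚ)) * (n.choose k)

/-!
Both sides equal `r ∫₀¹ x^(r-1) (1+x)^n dx`: expanding `(1+x)^n` by the binomial theorem and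
integrating term by term gives `S(r,n)`, while writing `x = (1+x) - 1` and expanding `x^(r-1)`
instead gives the alternating sum.
-/

open Finset intervalIntegral

lemma integral_one_add_pow (N : ℕ) :
    ∫ x in (0 : ℝ)..1, (1 + x) ^ N = (2 ^ (N + 1) - 1) / (N + 1) := by
  rw [integral_comp_add_left (fun x : ℝ => x ^ N), integral_pow]
  norm_num

lemma integral_pow_mul_one_add_pow_eq_sum_choose (r n : ℕ) :
    ∫ x in (0 : ℝ)..1, x ^ r * (1 + x) ^ n
      = ∑ k ∈ range (n + 1), (n.choose k : ℝ) / (k + r + 1) := by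
  simp_rw [add_comm (1 : ℝ), add_pow, one_pow, mul_one, mul_sum, ← mul_assoc, ← pow_add]
  rw [integral_finsetSum fun k _ => (by fun_prop : Continuous _).intervalIntegrable _ _]
  refine sum_congr rfl fun k _ => ?_
  rw [integral_mul_const, integral_pow]
  push_cast
  ring

lemma integral_pow_mul_one_add_pow_eq_alternating_sum (r n : ℕ) :
    ∫ x in (0 : ℝ)..1, x ^ r * (1 + x) ^ n
      = ∑ i ∈ range (r + 1),
          (-1) ^ (r - i) * (r.choose i : ℝ) * (2 ^ (n + i + 1) - 1) / (n + i + 1) := by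
  have h_expand (x : ℝ) : x ^ r * (1 + x) ^ n
      = ∑ i ∈ range (r + 1), (-1) ^ (r - i) * (r.choose i : ℝ) * (1 + x) ^ (n + i) := by
    rw [show x = (1 + x) + -1 by ring, add_pow, sum_mul]
    refine sum_congr rfl fun i _ => ?_
    ring
  simp_rw [h_expand]
  rw [integral_finsetSum fun i _ => (by fun_prop : Continuous _).intervalIntegrable _ _]
  refine sum_congr rfl fun i _ => ?_
  rw [integral_const_mul, integral_one_add_pow]
  push_cast
  ring

lemma cast_S_succ_eq_integral (r n : ℕ) :
    (S (r + 1) n : ℝ) = (r + 1) * ∫ x in (0 : ℝ)..1, x ^ r * (1 + x) ^ n := by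
  rw [integral_pow_mul_one_add_pow_eq_sum_choose, S, mul_sum]
  push_cast
  refine sum_congr rfl fun k _ => ?_
  ring

theorem S_eq_sum_formula_general (r n : ℕ) (hr : 0 < r) :
    S r n = ∑ j ∈ Finset.Icc 1 r,
      (-1 : ℚ) ^ (r - j) * (r : ℚ) * ((r - 1).choose (j - 1) : ℚ) *
        ((2 : ℚ) ^ (n + j) - 1) / ((n : ℚ) + (j : ℚ)) := by
  obtain ⟨r, rfl⟩ : ∃ m, r = m + 1 := ⟨r - 1, by omega⟩
  rw [← Ico_add_one_right_eq_Icc, sum_Ico_eq_sum_range, Nat.add_sub_cancel]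
  apply Rat.cast_injective (α := ℝ)
  rw [cast_S_succ_eq_integral, integral_pow_mul_one_add_pow_eq_alternating_sum, mul_sum]
  push_cast
  refine sum_congr rfl fun i _ => ?_
  simp only [add_comm 1 i, Nat.add_sub_add_right, Nat.add_sub_cancel]
  ring

theorem S_eq_sum_formula (r n : ℕ) (hr : 0 < r) (hn : 0 < n) :
    S r n = ∑ j ∈ Finset.Icc 1 r,
      (-1 : ℚ) ^ (r - j) * (r : ℚ) * ((r - 1).choose (j - 1) : ℚ) *
        ((2 : ℚ) ^ (n + j) - 1) / ((n : ℚ) + (j : ℚ)) :=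
  S_eq_sum_formula_general r n hr
end

section
/- Let r and n be positive integers. If there is a prime p > n that divides one of the integers 1+r, 2+r, \ldots, n+r, then S_r(n) is not an integer. -/
/-!
Since `p > n`, the prime `p` divides neither `k` nor `n.choose k` for `1 ≤ k ≤ n`, so the `p`-adic
norm of the `k`-th term of `S_r(n)` is `|k + r|_p⁻¹`. The numbers `k + r` with `1 ≤ k ≤ n` lie in
an interval shorter than `p`, so exactly one of them is divisible by `p`: that term has norm `> 1`
and all others norm `1`. By the ultrametric inequality `|S_r(n)|_p > 1`, whereas integers have
`p`-adic norm `≤ 1`.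
-/

/-- `S_r(n) = ∑_{k=1}^n (k/(k+r)) * C(n,k)` as a rational number. -/
def Sr (r n : ℕ) : ℚ :=
  ∑ k ∈ Finset.Icc 1 n, (k : ℚ) / ((k : ℚ) + (r : ℚ)) * (n.choose k)

theorem Nat.eq_of_dvd_add_of_dvd_add {p k l r : ℕ} (hk : k < p) (hl : l < p)
    (hkr : p ∣ k + r) (hlr : p ∣ l + r) : k = l :=
  (Nat.ModEq.add_right_cancel' r <|
    (Nat.modEq_zero_iff_dvd.2 hkr).trans (Nat.modEq_zero_iff_dvd.2 hlr).symm).eq_of_lt_of_lt hk hl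

namespace padicNorm

variable {p : ℕ} [Fact p.Prime]

theorem sum_eq_of_forall_lt {ι : Type*} [DecidableEq ι] {s : Finset ι} {f : ι → ℚ} {i : ι}
    (hi : i ∈ s) (h : ∀ j ∈ s.erase i, padicNorm p (f j) < padicNorm p (f i)) :
    padicNorm p (∑ j ∈ s, f j) = padicNorm p (f i) := by
  rw [← Finset.add_sum_erase s f hi]
  obtain hs | hs := (s.erase i).eq_empty_or_nonempty
  · simp [hs]
  · have hrest := sum_lt hs h
    rw [add_eq_max_of_ne hrest.ne', max_eq_left hrest.le]

theorem div_add_mul_choose (r : ℕ) {n k : ℕ} (hk : 0 < k) (hkn : k ≤ n) (hnp : n < p) :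
    padicNorm p ((k : ℚ) / (k + r) * n.choose k) = (padicNorm p ((k + r : ℕ) : ℚ))⁻¹ := by
  have hp : p.Prime := Fact.out
  have hk : padicNorm p (k : ℚ) = 1 :=
    (nat_eq_one_iff k).2 fun h => (Nat.le_of_dvd hk h).not_gt (hkn.trans_lt hnp)
  have hchoose : padicNorm p (n.choose k : ℚ) = 1 :=
    (nat_eq_one_iff _).2 ((Nat.Prime.coprime_iff_not_dvd hp).1 (hp.coprime_choose_of_lt hnp hkn))
  rw [padicNorm.mul, padicNorm.div, hk, hchoose]
  push_cast
  ring

end padicNorm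

theorem Sr_not_integral_of_large_prime_divisor_general (r n : ℕ)
    (p : ℕ) (hp : p.Prime) (hpn : n < p)
    (hdvd : ∃ k, 1 ≤ k ∧ k ≤ n ∧ p ∣ k + r) :
    ¬ ∃ m : ℤ, Sr r n = m := by
  have : Fact p.Prime := ⟨hp⟩
  obtain ⟨k₀, hk₀, hk₀n, hpk₀⟩ := hdvd
  have hk₀mem : k₀ ∈ Finset.Icc 1 n := Finset.mem_Icc.2 ⟨hk₀, hk₀n⟩
  have hnorm : ∀ k ∈ Finset.Icc 1 n, padicNorm p ((k : ℚ) / (k + r) * n.choose k)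
      = (padicNorm p ((k + r : ℕ) : ℚ))⁻¹ := fun k hk =>
    padicNorm.div_add_mul_choose r (Finset.mem_Icc.1 hk).1 (Finset.mem_Icc.1 hk).2 hpn
  have hbig : 1 < padicNorm p ((k₀ : ℚ) / (k₀ + r) * n.choose k₀) := by
    rw [hnorm k₀ hk₀mem]
    refine one_lt_inv_iff₀.2 ⟨?_, (padicNorm.nat_lt_one_iff _).2 hpk₀⟩
    exact (padicNorm.nonneg _).lt_of_ne' (padicNorm.nonzero (by positivity))
  have hsmall : ∀ k ∈ (Finset.Icc 1 n).erase k₀,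
      padicNorm p ((k : ℚ) / (k + r) * n.choose k) = 1 := by
    intro k hk
    obtain ⟨hkk₀, hkmem⟩ := Finset.mem_erase.1 hk
    rw [hnorm k hkmem, inv_eq_one, padicNorm.nat_eq_one_iff]
    exact fun hpk => hkk₀ (Nat.eq_of_dvd_add_of_dvd_add
      ((Finset.mem_Icc.1 hkmem).2.trans_lt hpn) (hk₀n.trans_lt hpn) hpk hpk₀)
  rintro ⟨m, hm⟩
  have hSr : padicNorm p (Sr r n) = _ :=
    padicNorm.sum_eq_of_forall_lt hk₀mem fun k hk => (hsmall k hk).trans_lt hbig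
  exact (hbig.trans_eq hSr.symm).not_ge (hm ▸ padicNorm.of_int m)

theorem Sr_not_integral_of_large_prime_divisor (r n : ℕ) (hr : 0 < r) (hn : 0 < n)
    (p : ℕ) (hp : p.Prime) (hpn : n < p)
    (hdvd : ∃ k, 1 ≤ k ∧ k ≤ n ∧ p ∣ k + r) :
    ¬ ∃ m : ℤ, Sr r n = m :=
  Sr_not_integral_of_large_prime_divisor_general r n p hp hpn hdvd
end

section
/- For every integer r \ge 2, the number of primes p with r \le p \le r + r^{0.61} and \ell_2(p) \le r^{0.3} is at most r^{0.6} \cdot \log 2 / \log r (i.e., at most r^{0.6} / \log_2 r). -/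
/-!
Every odd prime `p` with `ℓ₂(p) ≤ D` divides `∏_{d=1}^{D} (2^d - 1) ≤ 2^{D²}`, so if `k` such primes
are at least `r`, then `r^k ≤ 2^{D²}`; with `D = ⌊r^{0.3}⌋` this is `k log r ≤ r^{0.6} log 2`.
The prime `2`, whose order in `ZMod 2` is `0`, only matters for `r = 2`, and then no odd prime
qualifies, since it would need `ℓ₂(p) = 1`.
-/

open Finset Real

theorem Nat.dvd_pow_orderOf_sub_one (a n : ℕ) : n ∣ a ^ orderOf (a : ZMod n) - 1 := by
  rcases Nat.eq_zero_or_pos a with rfl | ha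
  · generalize orderOf ((0 : ℕ) : ZMod n) = k
    cases k <;> simp
  · rw [← ZMod.natCast_eq_zero_iff, Nat.cast_sub (Nat.one_le_pow _ _ ha)]
    push_cast
    rw [pow_orderOf_eq_one, sub_self]

theorem Nat.Prime.orderOf_natCast_pos {p a : ℕ} (hp : p.Prime) (ha : ¬p ∣ a) :
    0 < orderOf (a : ZMod p) := by
  have := Fact.mk hp
  have ha0 : (a : ZMod p) ≠ 0 := by rwa [Ne, ZMod.natCast_eq_zero_iff]
  exact Nat.pos_of_dvd_of_pos (ZMod.orderOf_dvd_card_sub_one ha0) (by have := hp.two_le; omega)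

theorem Nat.Prime.dvd_prod_Icc_pow_sub_one {p a D : ℕ} (hp : p.Prime) (ha : ¬p ∣ a)
    (hD : orderOf (a : ZMod p) ≤ D) : p ∣ ∏ d ∈ Icc 1 D, (a ^ d - 1) :=
  (Nat.dvd_pow_orderOf_sub_one a p).trans <|
    dvd_prod_of_mem _ (mem_Icc.mpr ⟨hp.orderOf_natCast_pos ha, hD⟩)

theorem prod_Icc_pow_sub_one_pos {a : ℕ} (ha : 2 ≤ a) (D : ℕ) :
    0 < ∏ d ∈ Icc 1 D, (a ^ d - 1) :=
  prod_pos fun d hd => Nat.sub_pos_of_lt <| Nat.one_lt_pow (by grind) (by omega)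

theorem prod_Icc_pow_sub_one_le {a : ℕ} (ha : 0 < a) (D : ℕ) :
    ∏ d ∈ Icc 1 D, (a ^ d - 1) ≤ a ^ (D * D) :=
  calc ∏ d ∈ Icc 1 D, (a ^ d - 1)
      ≤ ∏ d ∈ Icc 1 D, a ^ d := prod_le_prod' fun _ _ => Nat.sub_le _ _
    _ = a ^ ∑ d ∈ Icc 1 D, d := prod_pow_eq_pow_sum _ _ _
    _ ≤ a ^ (D * D) := Nat.pow_le_pow_right ha <| by
        simpa using sum_le_card_nsmul (Icc 1 D) id D fun d hd => (mem_Icc.mp hd).2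

theorem pow_card_le_of_primes_dvd {t : Finset ℕ} {r N : ℕ} (hN : 0 < N)
    (ht : ∀ p ∈ t, p.Prime ∧ r ≤ p ∧ p ∣ N) : r ^ t.card ≤ N :=
  calc r ^ t.card ≤ ∏ p ∈ t, p := pow_card_le_prod _ _ _ fun p hp => (ht p hp).2.1
    _ ≤ N := Nat.le_of_dvd hN <|
        prod_primes_dvd N (fun p hp => (ht p hp).1.prime) fun p hp => (ht p hp).2.2

theorem pow_card_le_of_orderOf_le {a r D : ℕ} (ha : 2 ≤ a) {t : Finset ℕ}
    (ht : ∀ p ∈ t, p.Prime ∧ ¬p ∣ a ∧ r ≤ p ∧ orderOf (a : ZMod p) ≤ D) :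
    r ^ t.card ≤ a ^ (D * D) :=
  (pow_card_le_of_primes_dvd (prod_Icc_pow_sub_one_pos ha D) fun p hp =>
      ⟨(ht p hp).1, (ht p hp).2.2.1, (ht p hp).1.dvd_prod_Icc_pow_sub_one (ht p hp).2.1
        (ht p hp).2.2.2⟩).trans
    (prod_Icc_pow_sub_one_le (by omega) D)

theorem Nat.Prime.eq_two_of_orderOf_two_le_one {p : ℕ} (hp : p.Prime)
    (h : orderOf (2 : ZMod p) ≤ 1) : p = 2 := by
  by_contra hp2
  have := hp.dvd_prod_Icc_pow_sub_one (mt (Nat.prime_dvd_prime_iff_eq hp Nat.prime_two).mp hp2) h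
  exact hp.one_lt.ne' (by simpa using this)

theorem mul_log_le_of_pow_le_two_pow {r k n : ℕ} {B : ℝ} (hr : 0 < r) (h : r ^ k ≤ 2 ^ n)
    (hn : (n : ℝ) ≤ B) : k * log r ≤ B * log 2 :=
  calc k * log r = log ((r ^ k : ℕ) : ℝ) := by push_cast; rw [log_pow]
    _ ≤ log ((2 ^ n : ℕ) : ℝ) := log_le_log (by positivity) (by exact_mod_cast h)
    _ = n * log 2 := by push_cast; rw [log_pow]
    _ ≤ B * log 2 := mul_le_mul_of_nonneg_right hn (log_nonneg one_le_two)

theorem count_primes_small_order (r : ℕ) (hr : 2 ≤ r) :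
    (Nat.card {p : ℕ | p.Prime ∧ (r : ℝ) ≤ p ∧ (p : ℝ) ≤ (r : ℝ) + (r : ℝ) ^ (0.61 : ℝ) ∧
        (orderOf (2 : ZMod p) : ℝ) ≤ (r : ℝ) ^ (0.3 : ℝ)} : ℝ)
      ≤ (r : ℝ) ^ (0.6 : ℝ) * Real.log 2 / Real.log r := by
  set S := {p : ℕ | p.Prime ∧ (r : ℝ) ≤ p ∧ (p : ℝ) ≤ (r : ℝ) + (r : ℝ) ^ (0.61 : ℝ) ∧
        (orderOf (2 : ZMod p) : ℝ) ≤ (r : ℝ) ^ (0.3 : ℝ)}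
  rw [le_div_iff₀ (log_pos (by exact_mod_cast hr))]
  rcases hr.eq_or_lt with rfl | hr3
  · have hS : S ⊆ {2} := fun p ⟨hp, _, _, hord⟩ => hp.eq_two_of_orderOf_two_le_one <|
      Nat.lt_succ_iff.mp <| by
        exact_mod_cast hord.trans_lt (rpow_lt_self_of_one_lt one_lt_two (by norm_num))
    have hcard : (Nat.card S : ℝ) ≤ 1 := by
      exact_mod_cast (by simpa using Nat.card_mono (Set.finite_singleton 2) hS)
    push_cast
    gcongr
    exact hcard.trans (one_le_rpow one_le_two (by norm_num))
  · set D := ⌊(r : ℝ) ^ (0.3 : ℝ)⌋₊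
    have hfin : S.Finite := (Set.finite_Iic ⌊(r : ℝ) + (r : ℝ) ^ (0.61 : ℝ)⌋₊).subset
      fun p hp => Nat.le_floor hp.2.2.1
    have hpow : r ^ Nat.card S ≤ 2 ^ (D * D) := by
      rw [Nat.card_eq_card_finite_toFinset hfin]
      refine pow_card_le_of_orderOf_le le_rfl fun p hpS => ?_
      obtain ⟨hp, hrp, -, hord⟩ := hfin.mem_toFinset.mp hpS
      have hrp' : r ≤ p := by exact_mod_cast hrp
      exact ⟨hp, fun h => by have := Nat.le_of_dvd two_pos h; omega, hrp', Nat.le_floor hord⟩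
    refine mul_log_le_of_pow_le_two_pow (by omega) hpow ?_
    have hD : (D : ℝ) ≤ (r : ℝ) ^ (0.3 : ℝ) := Nat.floor_le (by positivity)
    calc ((D * D : ℕ) : ℝ) ≤ (r : ℝ) ^ (0.3 : ℝ) * (r : ℝ) ^ (0.3 : ℝ) := by push_cast; gcongr
      _ = (r : ℝ) ^ (0.6 : ℝ) := by rw [← rpow_add (by positivity)]; norm_num
end

section
/- Let r and n be positive integers and let p > \max(r, 2) be a prime such that there is exactly one index j_0 \in \{1, \ldots, r\} with p \mid n + j_0. If S(r,n) is an integer, then \ell_2(p) divides n + j_0. -/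
open Finset intervalIntegral

theorem S_succ_eq_integral (r n : ℕ) :
    (S (r + 1) n : ℝ) = (r + 1) * ∫ x in (0 : ℝ)..1, x ^ r * (x + 1) ^ n := by
  simp only [S, add_pow, one_pow, mul_one, mul_sum]
  rw [integral_finsetSum fun k _ => (by fun_prop : Continuous _).intervalIntegrable _ _, mul_sum]
  push_cast
  refine sum_congr rfl fun k _ => ?_
  have hmonomial : (fun x : ℝ => x ^ r * (x ^ k * (n.choose k : ℝ))) =
      fun x => (n.choose k : ℝ) * x ^ (k + r) := by
    ext x; ring
  rw [hmonomial, integral_const_mul, integral_pow]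
  push_cast
  field_simp
  ring

theorem integral_pow_mul_add_one_pow_eq (r n : ℕ) :
    ∫ x in (0 : ℝ)..1, x ^ r * (x + 1) ^ n = ∫ x in (1 : ℝ)..2, (x - 1) ^ r * x ^ n := by
  have h := integral_comp_sub_right (fun x : ℝ => x ^ r * (x + 1) ^ n) (a := 1) (b := 2) 1
  norm_num at h
  exact h.symm

theorem S_succ_eq_sum (r n : ℕ) :
    (S (r + 1) n : ℝ) = ∑ i ∈ range (r + 1),
      ((r + 1) * r.choose i * (-1) ^ (i + r) * (2 ^ (n + i + 1) - 1) : ℝ) / (n + i + 1) := by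
  rw [S_succ_eq_integral, integral_pow_mul_add_one_pow_eq]
  simp only [sub_pow, one_pow, mul_one, sum_mul]
  rw [integral_finsetSum fun i _ => (by fun_prop : Continuous _).intervalIntegrable _ _, mul_sum]
  refine sum_congr rfl fun i _ => ?_
  have hmonomial : (fun x : ℝ => (-1) ^ (i + r) * x ^ i * (r.choose i : ℝ) * x ^ n) =
      fun x => (-1) ^ (i + r) * (r.choose i : ℝ) * x ^ (n + i) := by
    ext x; ring
  rw [hmonomial, integral_const_mul, integral_pow]
  push_cast
  field_simp
  ring

theorem Prime.dvd_of_intCast_eq_sum_div {K ι : Type*} [Field K] [CharZero K] [DecidableEq ι]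
    {p : ℤ} (hp : Prime p) {s : Finset ι} {a d : ι → ℤ} (hd : ∀ i ∈ s, d i ≠ 0)
    {i₀ : ι} (hi₀ : i₀ ∈ s) (hpd : p ∣ d i₀) (hpd' : ∀ i ∈ s, i ≠ i₀ → ¬ p ∣ d i)
    {m : ℤ} (hm : (m : K) = ∑ i ∈ s, (a i : K) / d i) : p ∣ a i₀ := by
  have hcleared : m * ∏ i ∈ s, d i = ∑ i ∈ s, a i * ∏ j ∈ s.erase i, d j := by
    apply Int.cast_injective (α := K)
    push_cast
    rw [hm, sum_mul]
    refine sum_congr rfl fun i hi => ?_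
    have hdi : (d i : K) ≠ 0 := by exact_mod_cast hd i hi
    rw [← mul_prod_erase s (fun j => (d j : K)) hi]
    field_simp
  have hother : p ∣ ∑ i ∈ s.erase i₀, a i * ∏ j ∈ s.erase i, d j :=
    dvd_sum fun i hi => dvd_mul_of_dvd_right
      (hpd.trans (dvd_prod_of_mem _ (mem_erase.2 ⟨(ne_of_mem_erase hi).symm, hi₀⟩))) _
  have hall : p ∣ ∑ i ∈ s, a i * ∏ j ∈ s.erase i, d j :=
    hcleared ▸ dvd_mul_of_dvd_right (hpd.trans (dvd_prod_of_mem _ hi₀)) _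
  rw [← add_sum_erase s _ hi₀] at hall
  have hnot : ¬ p ∣ ∏ j ∈ s.erase i₀, d j := fun h => by
    obtain ⟨j, hj, hpj⟩ := (hp.dvd_finsetProd_iff _).1 h
    exact hpd' j (mem_of_mem_erase hj) (ne_of_mem_erase hj) hpj
  exact (hp.dvd_or_dvd ((dvd_add_left hother).1 hall)).resolve_right hnot

theorem ZMod.succ_mul_choose_ne_zero {p r i : ℕ} [Fact p.Prime] (hrp : r + 1 < p) (hi : i ≤ r) :
    ((r + 1) * r.choose i : ZMod p) ≠ 0 := by
  have hp := Fact.out (p := p.Prime)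
  have hsucc : ((r + 1 : ℕ) : ZMod p) ≠ 0 := by
    rw [Ne, ZMod.natCast_eq_zero_iff]
    exact Nat.not_dvd_of_pos_of_lt r.succ_pos hrp
  have hchoose : (r.choose i : ZMod p) ≠ 0 := by
    rw [Ne, ZMod.natCast_eq_zero_iff, ← hp.coprime_iff_not_dvd]
    exact hp.coprime_choose_of_lt (by omega) hi
  push_cast at hsucc
  exact mul_ne_zero hsucc hchoose

theorem order_dvd_of_S_integral_general (r n : ℕ)
    (p : ℕ) (hp : p.Prime) (hpr : max r 2 < p)
    (j₀ : ℕ) (hj₀ : 1 ≤ j₀ ∧ j₀ ≤ r) (hdvd : p ∣ n + j₀)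
    (huniq : ∀ j, 1 ≤ j → j ≤ r → p ∣ n + j → j = j₀)
    (hint : ∃ m : ℤ, S r n = m) :
    orderOf (2 : ZMod p) ∣ n + j₀ := by
  obtain ⟨m, hm⟩ := hint
  obtain ⟨r, rfl⟩ : ∃ r', r = r' + 1 := ⟨r - 1, by omega⟩
  obtain ⟨i₀, rfl⟩ : ∃ i, j₀ = i + 1 := ⟨j₀ - 1, by omega⟩
  have hterm : (p : ℤ) ∣ (r + 1) * r.choose i₀ * (-1) ^ (i₀ + r) * (2 ^ (n + i₀ + 1) - 1) := by
    refine (Nat.prime_iff_prime_int.1 hp).dvd_of_intCast_eq_sum_div (K := ℝ) (s := range (r + 1))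
      (a := fun i => (r + 1) * r.choose i * (-1) ^ (i + r) * (2 ^ (n + i + 1) - 1))
      (d := fun i => n + i + 1) (m := m) (fun i _ => by omega) (mem_range.2 (by omega))
      (mod_cast hdvd) (fun i hi hne hpi => hne ?_) ?_
    · have := huniq (i + 1) (by omega) (by simp at hi; omega) (mod_cast hpi)
      omega
    · rw [← Rat.cast_intCast, ← hm, S_succ_eq_sum]
      push_cast
      rfl
  have := Fact.mk hp
  have hzero := (ZMod.intCast_zmod_eq_zero_iff_dvd _ p).2 hterm
  push_cast at hzero
  simp only [mul_eq_zero, ZMod.succ_mul_choose_ne_zero (p := p) (by omega) (by omega : i₀ ≤ r),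
    pow_eq_zero_iff', neg_eq_zero, one_ne_zero, false_and, or_self, false_or, sub_eq_zero] at hzero
  exact orderOf_dvd_of_pow_eq_one (by rwa [← add_assoc])

theorem order_dvd_of_S_integral (r n : ℕ) (hr : 0 < r) (hn : 0 < n)
    (p : ℕ) (hp : p.Prime) (hpr : max r 2 < p)
    (j₀ : ℕ) (hj₀ : 1 ≤ j₀ ∧ j₀ ≤ r) (hdvd : p ∣ n + j₀)
    (huniq : ∀ j, 1 ≤ j → j ≤ r → p ∣ n + j → j = j₀)
    (hint : ∃ m : ℤ, S r n = m) :
    orderOf (2 : ZMod p) ∣ n + j₀ :=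
  order_dvd_of_S_integral_general r n p hp hpr j₀ hj₀ hdvd huniq hint
end

section
/- There exists r_0 such that for every integer r > r_0 the following holds: if p_1, p_2, p_3, p_4 are distinct primes with r < p_i \le r + r^{0.61}, \ell_2(p_i) > r^{0.3} for each i, and \gcd(p_i - 1, p_j - 1) < r^{0.001} for all i < j, then \operatorname{lcm}(p_1, p_2, p_3, p_4, \ell_2(p_1), \ell_2(p_2), \ell_2(p_3), \ell_2(p_4)) > r^{5.194}. -/
/-!
Every pᵢ lies in (r, 2r], so a prime q > r cannot divide pⱼ - 1 (the quotient would be 1, making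
pⱼ = q + 1 even), hence cannot divide ℓ₂(pⱼ) ∣ pⱼ - 1. The lcm therefore splits as
(p₁p₂p₃p₄) · lcm(ℓ₂(pᵢ)) with p₁p₂p₃p₄ > r⁴. Four numbers a, b, c, d satisfy
abcd ∣ lcm(a, b, c, d) · ∏ gcd over the six pairs; since gcd(ℓ₂(pᵢ), ℓ₂(pⱼ)) ≤ gcd(pᵢ - 1, pⱼ - 1),
this gives lcm(ℓ₂(pᵢ)) · r^0.006 > r^1.2, and 4 + 1.2 - 0.006 = 5.194.
-/

namespace Nat

theorem gcd_lcm_dvd_mul_gcd (a b c : ℕ) : (a.lcm b).gcd c ∣ a.gcd c * b.gcd c :=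
  (gcd_dvd_gcd (lcm_dvd_mul a b) dvd_rfl).trans (gcd_mul_left_dvd_mul_gcd c a b)

theorem mul_mul_mul_dvd_lcm_mul_gcd (a b c d : ℕ) :
    a * b * c * d ∣ ((a.lcm b).lcm (c.lcm d)) *
      (a.gcd b * (a.gcd c * b.gcd c) * (a.gcd d * b.gcd d * c.gcd d)) := by
  have hc := gcd_lcm_dvd_mul_gcd a b c
  have hd : ((a.lcm b).lcm c).gcd d ∣ a.gcd d * b.gcd d * c.gcd d :=
    (gcd_lcm_dvd_mul_gcd _ c d).trans (mul_dvd_mul_right (gcd_lcm_dvd_mul_gcd a b d) _)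
  have h : a * b * c * d = ((a.lcm b).lcm (c.lcm d)) *
      (a.gcd b * (a.lcm b).gcd c * ((a.lcm b).lcm c).gcd d) :=
    calc a * b * c * d = a.gcd b * (a.lcm b * c) * d := by rw [← gcd_mul_lcm a b]; ring
      _ = a.gcd b * (a.lcm b).gcd c * ((a.lcm b).lcm c * d) := by
        rw [← gcd_mul_lcm (a.lcm b) c]; ring
      _ = _ := by rw [← gcd_mul_lcm ((a.lcm b).lcm c) d, lcm_assoc (a.lcm b) c d]; ring
  rw [h]
  exact mul_dvd_mul_left _ (mul_dvd_mul (mul_dvd_mul_left _ hc) hd)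

theorem Prime.not_dvd_sub_one_of_le_two_mul {p q : ℕ} (hp : p.Prime) (hq : q.Prime)
    (hq2 : q ≠ 2) (hpq : p ≤ 2 * q) : ¬ q ∣ p - 1 := by
  rintro ⟨k, hk⟩
  have := hp.two_le
  obtain _ | _ | k := k
  · omega
  · have hpq1 : p = q + 1 := by omega
    have : p = 2 := hp.even_iff.1 (hpq1 ▸ (hq.odd_of_ne_two hq2).add_one)
    have := hq.two_le
    omega
  · have : p = q * (k + 1 + 1) + 1 := by omega
    nlinarith

theorem coprime_of_forall_prime_dvd {m n r : ℕ} (hm : ∀ q, q.Prime → q ∣ m → r < q)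
    (hn : ∀ q, q.Prime → q ∣ n → q ≤ r) : m.Coprime n :=
  coprime_of_dvd fun q hq hqm hqn => (hm q hq hqm).not_ge (hn q hq hqn)

end Nat

theorem orderOf_two_dvd_sub_one {p : ℕ} (hp : p.Prime) (hp2 : p ≠ 2) :
    orderOf (2 : ZMod p) ∣ p - 1 := by
  have := Fact.mk hp
  refine ZMod.orderOf_dvd_card_sub_one ?_
  exact_mod_cast (ZMod.natCast_eq_zero_iff 2 p).not.2
    fun h => hp2 ((Nat.prime_dvd_prime_iff_eq hp Nat.prime_two).1 h)

theorem gcd_orderOf_two_le {p q : ℕ} (hp : p.Prime) (hq : q.Prime) (hp2 : p ≠ 2) (hq2 : q ≠ 2) :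
    (orderOf (2 : ZMod p)).gcd (orderOf (2 : ZMod q)) ≤ (p - 1).gcd (q - 1) :=
  Nat.le_of_dvd (Nat.gcd_pos_of_pos_left _ (Nat.sub_pos_of_lt hp.one_lt))
    (gcd_dvd_gcd (orderOf_two_dvd_sub_one hp hp2) (orderOf_two_dvd_sub_one hq hq2))

theorem le_of_prime_dvd_orderOf_two {p q r : ℕ} (hp : p.Prime) (hq : q.Prime) (hr : 2 ≤ r)
    (hrp : r < p) (hpr : p ≤ 2 * r) (h : q ∣ orderOf (2 : ZMod p)) : q ≤ r := by
  by_contra! hrq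
  exact hp.not_dvd_sub_one_of_le_two_mul hq (by omega) (by omega)
    (h.trans (orderOf_two_dvd_sub_one hp (by omega)))

theorem le_two_mul_of_le_add_rpow {p r : ℕ} {θ : ℝ} (hr : 1 ≤ r) (hθ : θ ≤ 1)
    (hp : (p : ℝ) ≤ r + r ^ θ) : p ≤ 2 * r := by
  have : (r : ℝ) ^ θ ≤ r := Real.rpow_le_self_of_one_le (by exact_mod_cast hr) hθ
  exact_mod_cast (by push_cast; linarith : (p : ℝ) ≤ (2 * r : ℕ))

theorem pow_four_lt_lcm_mul_pow_six {a b c d : ℕ} {A B : ℝ} (hA : 0 ≤ A)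
    (ha : A < a) (hb : A < b) (hc : A < c) (hd : A < d)
    (hab : (a.gcd b : ℝ) ≤ B) (hac : (a.gcd c : ℝ) ≤ B) (had : (a.gcd d : ℝ) ≤ B)
    (hbc : (b.gcd c : ℝ) ≤ B) (hbd : (b.gcd d : ℝ) ≤ B) (hcd : (c.gcd d : ℝ) ≤ B) :
    A ^ 4 < ((a.lcm b).lcm (c.lcm d) : ℕ) * B ^ 6 := by
  have hB : 0 ≤ B := (Nat.cast_nonneg _).trans hab
  have ha0 : 0 < a := by exact_mod_cast hA.trans_lt ha
  have hb0 : 0 < b := by exact_mod_cast hA.trans_lt hb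
  have hc0 : 0 < c := by exact_mod_cast hA.trans_lt hc
  have hd0 : 0 < d := by exact_mod_cast hA.trans_lt hd
  have hpos : 0 < ((a.lcm b).lcm (c.lcm d)) *
      (a.gcd b * (a.gcd c * b.gcd c) * (a.gcd d * b.gcd d * c.gcd d)) := by
    have := Nat.lcm_pos (Nat.lcm_pos ha0 hb0) (Nat.lcm_pos hc0 hd0)
    positivity
  calc A ^ 4 = A * A * A * A := by ring
    _ < a * b * c * d := by gcongr
    _ ≤ ((a.lcm b).lcm (c.lcm d) : ℕ) *
        (a.gcd b * (a.gcd c * b.gcd c) * (a.gcd d * b.gcd d * c.gcd d) : ℕ) := by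
      exact_mod_cast Nat.le_of_dvd hpos (Nat.mul_mul_mul_dvd_lcm_mul_gcd a b c d)
    _ ≤ ((a.lcm b).lcm (c.lcm d) : ℕ) * (B * (B * B) * (B * B * B)) := by
      push_cast; gcongr
    _ = ((a.lcm b).lcm (c.lcm d) : ℕ) * B ^ 6 := by ring
theorem coprime_lcm_primes_lcm_orderOf_two {r p₁ p₂ p₃ p₄ : ℕ} (hr : 2 ≤ r)
    (hp₁ : p₁.Prime) (hp₂ : p₂.Prime) (hp₃ : p₃.Prime) (hp₄ : p₄.Prime)
    (h₁ : r < p₁ ∧ p₁ ≤ 2 * r) (h₂ : r < p₂ ∧ p₂ ≤ 2 * r)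
    (h₃ : r < p₃ ∧ p₃ ≤ 2 * r) (h₄ : r < p₄ ∧ p₄ ≤ 2 * r) :
    ((p₁.lcm p₂).lcm (p₃.lcm p₄)).Coprime
      (((orderOf (2 : ZMod p₁)).lcm (orderOf (2 : ZMod p₂))).lcm
        ((orderOf (2 : ZMod p₃)).lcm (orderOf (2 : ZMod p₄)))) := by
  refine Nat.coprime_of_forall_prime_dvd (r := r) (fun q hq h => ?_) (fun q hq h => ?_)
  · simp only [hq.dvd_lcm, Nat.prime_dvd_prime_iff_eq hq hp₁, Nat.prime_dvd_prime_iff_eq hq hp₂,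
      Nat.prime_dvd_prime_iff_eq hq hp₃, Nat.prime_dvd_prime_iff_eq hq hp₄] at h
    rcases h with (rfl | rfl) | (rfl | rfl) <;> omega
  · simp only [hq.dvd_lcm] at h
    rcases h with (h | h) | (h | h)
    exacts [le_of_prime_dvd_orderOf_two hp₁ hq hr h₁.1 h₁.2 h,
      le_of_prime_dvd_orderOf_two hp₂ hq hr h₂.1 h₂.2 h,
      le_of_prime_dvd_orderOf_two hp₃ hq hr h₃.1 h₃.2 h,
      le_of_prime_dvd_orderOf_two hp₄ hq hr h₄.1 h₄.2 h]

theorem lcm_lower_bound :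
    ∃ r₀ : ℕ, ∀ r : ℕ, r₀ < r →
      ∀ p₁ p₂ p₃ p₄ : ℕ,
        p₁.Prime → p₂.Prime → p₃.Prime → p₄.Prime →
        p₁ ≠ p₂ → p₁ ≠ p₃ → p₁ ≠ p₄ → p₂ ≠ p₃ → p₂ ≠ p₄ → p₃ ≠ p₄ →
        (r < p₁ ∧ (p₁ : ℝ) ≤ (r : ℝ) + (r : ℝ) ^ (0.61 : ℝ)) →
        (r < p₂ ∧ (p₂ : ℝ) ≤ (r : ℝ) + (r : ℝ) ^ (0.61 : ℝ)) →
        (r < p₃ ∧ (p₃ : ℝ) ≤ (r : ℝ) + (r : ℝ) ^ (0.61 : ℝ)) →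
        (r < p₄ ∧ (p₄ : ℝ) ≤ (r : ℝ) + (r : ℝ) ^ (0.61 : ℝ)) →
        (r : ℝ) ^ (0.3 : ℝ) < (orderOf (2 : ZMod p₁) : ℝ) →
        (r : ℝ) ^ (0.3 : ℝ) < (orderOf (2 : ZMod p₂) : ℝ) →
        (r : ℝ) ^ (0.3 : ℝ) < (orderOf (2 : ZMod p₃) : ℝ) →
        (r : ℝ) ^ (0.3 : ℝ) < (orderOf (2 : ZMod p₄) : ℝ) →
        (Nat.gcd (p₁ - 1) (p₂ - 1) : ℝ) < (r : ℝ) ^ (0.001 : ℝ) →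
        (Nat.gcd (p₁ - 1) (p₃ - 1) : ℝ) < (r : ℝ) ^ (0.001 : ℝ) →
        (Nat.gcd (p₁ - 1) (p₄ - 1) : ℝ) < (r : ℝ) ^ (0.001 : ℝ) →
        (Nat.gcd (p₂ - 1) (p₃ - 1) : ℝ) < (r : ℝ) ^ (0.001 : ℝ) →
        (Nat.gcd (p₂ - 1) (p₄ - 1) : ℝ) < (r : ℝ) ^ (0.001 : ℝ) →
        (Nat.gcd (p₃ - 1) (p₄ - 1) : ℝ) < (r : ℝ) ^ (0.001 : ℝ) →
        (r : ℝ) ^ (5.194 : ℝ) <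
          (Nat.lcm (Nat.lcm (Nat.lcm p₁ p₂) (Nat.lcm p₃ p₄))
            (Nat.lcm (Nat.lcm (orderOf (2 : ZMod p₁)) (orderOf (2 : ZMod p₂)))
              (Nat.lcm (orderOf (2 : ZMod p₃)) (orderOf (2 : ZMod p₄)))) : ℝ) := by
  refine ⟨1, fun r hr p₁ p₂ p₃ p₄ hp₁ hp₂ hp₃ hp₄ h12 h13 h14 h23 h24 h34 hw₁ hw₂ hw₃ hw₄
    ho₁ ho₂ ho₃ ho₄ hg12 hg13 hg14 hg23 hg24 hg34 => ?_⟩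
  have hx : (0 : ℝ) < r := by positivity
  have hle : ∀ {p : ℕ}, r < p ∧ (p : ℝ) ≤ r + r ^ (0.61 : ℝ) → r < p ∧ p ≤ 2 * r :=
    fun hp => ⟨hp.1, le_two_mul_of_le_add_rpow hr.le (by norm_num) hp.2⟩
  have hcop := coprime_lcm_primes_lcm_orderOf_two hr hp₁ hp₂ hp₃ hp₄
    (hle hw₁) (hle hw₂) (hle hw₃) (hle hw₄)
  have hgp : ∀ {p q : ℕ}, p.Prime → q.Prime → p ≠ q → ((p.gcd q : ℕ) : ℝ) ≤ 1 :=
    fun hp hq h => by rw [((Nat.coprime_primes hp hq).2 h).gcd_eq_one, Nat.cast_one]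
  have hgℓ : ∀ {p q : ℕ}, p.Prime → q.Prime → r < p → r < q →
      ((p - 1).gcd (q - 1) : ℝ) < r ^ (0.001 : ℝ) →
      ((orderOf (2 : ZMod p)).gcd (orderOf (2 : ZMod q)) : ℝ) ≤ r ^ (0.001 : ℝ) :=
    fun hp hq hrp hrq h =>
      (Nat.cast_le.2 (gcd_orderOf_two_le hp hq (by omega) (by omega))).trans h.le
  have hP := pow_four_lt_lcm_mul_pow_six (A := r) (B := 1) hx.le (by exact_mod_cast hw₁.1)
    (by exact_mod_cast hw₂.1) (by exact_mod_cast hw₃.1) (by exact_mod_cast hw₄.1)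
    (hgp hp₁ hp₂ h12) (hgp hp₁ hp₃ h13) (hgp hp₁ hp₄ h14) (hgp hp₂ hp₃ h23)
    (hgp hp₂ hp₄ h24) (hgp hp₃ hp₄ h34)
  have hM := pow_four_lt_lcm_mul_pow_six (by positivity) ho₁ ho₂ ho₃ ho₄
    (hgℓ hp₁ hp₂ hw₁.1 hw₂.1 hg12) (hgℓ hp₁ hp₃ hw₁.1 hw₃.1 hg13) (hgℓ hp₁ hp₄ hw₁.1 hw₄.1 hg14)
    (hgℓ hp₂ hp₃ hw₂.1 hw₃.1 hg23) (hgℓ hp₂ hp₄ hw₂.1 hw₄.1 hg24) (hgℓ hp₃ hp₄ hw₃.1 hw₄.1 hg34)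
  rw [one_pow, mul_one] at hP
  have hexp : (r : ℝ) ^ (5.194 : ℝ) * (r ^ (0.001 : ℝ)) ^ 6 = r ^ 4 * (r ^ (0.3 : ℝ)) ^ 4 := by
    simp only [← Real.rpow_natCast, ← Real.rpow_mul hx.le, ← Real.rpow_add hx]
    norm_num
  rw [hcop.lcm_eq_mul, Nat.cast_mul]
  refine lt_of_mul_lt_mul_right ?_ (by positivity : (0 : ℝ) ≤ (r ^ (0.001 : ℝ)) ^ 6)
  calc _ = (r : ℝ) ^ 4 * (r ^ (0.3 : ℝ)) ^ 4 := hexp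
    _ < _ := mul_lt_mul'' hP hM (by positivity) (by positivity)
    _ = _ := by ring
end
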